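/- Prescribed eigenvalues of the Gauss–Lobatto tridiagonal matrix: Let T̂_k be a k×k real symmetric tridiagonal matrix (k ≥ 2), let T̂_{k−1} be its leading principal (k−1)×(k−1) block, and let a < b be real numbers such that T̂_{k−1} − aI and T̂_{k−1} − bI are invertible. Let δ, μ ∈ ℝ^{k−1} solve (T̂_{k−1} − aI) δ = e_{k−1} and (T̂_{k−1} − bI) μ = e_{k−1}, assume δ_{k−1} ≠ μ_{k−1}, and let (α̃_k, β̃²) be the unique solution of the linear system α̃_k − δ_{k−1} β̃² = a, α̃_k − μ_{k−1} β̃² = b; assume β̃² > 0. Let T_k^{GL} be the matrix obtained from T̂_k by replacing its (k,k) entry with α̃_k and its (k−1,k) and (k,k−1) entries with √(β̃²). Then both a and b are eigenvalues of T_k^{GL}. -/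
import Mathlib


open Matrix

lemma mem_spectrum_of_mulVec_eq {n : ℕ} {M : Matrix (Fin n) (Fin n) ℝ} {c : ℝ}
    {v : Fin n → ℝ} (hv : v ≠ 0) (h : M *ᵥ v = c • v) : c ∈ spectrum ℝ M := by
  rw [← AlgEquiv.spectrum_eq (Matrix.toLinAlgEquiv' :
      Matrix (Fin n) (Fin n) ℝ ≃ₐ[ℝ] ((Fin n → ℝ) →ₗ[ℝ] (Fin n → ℝ))),
    ← Module.End.hasEigenvalue_iff_mem_spectrum]
  exact Module.End.hasEigenvalue_of_hasEigenvector
    ⟨Module.End.mem_eigenspace_iff.2 (by simpa using h), hv⟩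


/-- The leading principal `(k-1) × (k-1)` block of a `k × k` matrix. -/
def leadingBlock {k : ℕ} (T : Matrix (Fin k) (Fin k) ℝ) :
    Matrix (Fin (k - 1)) (Fin (k - 1)) ℝ :=
  T.submatrix (fun i => Fin.castLE (Nat.sub_le k 1) i) (fun i => Fin.castLE (Nat.sub_le k 1) i)

/-- **Prescribed eigenvalues of the Gauss–Lobatto tridiagonal matrix**: replacing the
`(k,k)` entry of a real symmetric tridiagonal matrix `T̂_k` by `α̃_k` and the `(k-1,k)` and
`(k,k-1)` entries by `√β̃²`, where `(α̃_k, β̃²)` solves `α̃_k - δ_{k-1} β̃² = a`,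
`α̃_k - μ_{k-1} β̃² = b` with `(T̂_{k-1} - aI) δ = e_{k-1}` and `(T̂_{k-1} - bI) μ = e_{k-1}`,
produces a matrix having both `a` and `b` as eigenvalues. -/
theorem gauss_lobatto_prescribed_eigenvalues
    {k : ℕ} (hk : 2 ≤ k)
    (T : Matrix (Fin k) (Fin k) ℝ) (hsymm : T.IsHermitian)
    (htri : ∀ i j : Fin k, ((i : ℕ) + 1 < (j : ℕ) ∨ (j : ℕ) + 1 < (i : ℕ)) → T i j = 0)
    (a b : ℝ) (hab : a < b)
    (hinva : IsUnit (leadingBlock T - a • (1 : Matrix (Fin (k - 1)) (Fin (k - 1)) ℝ)))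
    (hinvb : IsUnit (leadingBlock T - b • (1 : Matrix (Fin (k - 1)) (Fin (k - 1)) ℝ)))
    (δ μ : Fin (k - 1) → ℝ)
    (hδ : (leadingBlock T - a • (1 : Matrix (Fin (k - 1)) (Fin (k - 1)) ℝ)) *ᵥ δ
        = (Pi.single (⟨k - 2, by omega⟩ : Fin (k - 1)) 1 : Fin (k - 1) → ℝ))
    (hμ : (leadingBlock T - b • (1 : Matrix (Fin (k - 1)) (Fin (k - 1)) ℝ)) *ᵥ μ
        = (Pi.single (⟨k - 2, by omega⟩ : Fin (k - 1)) 1 : Fin (k - 1) → ℝ))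
    (hδμ : δ ⟨k - 2, by omega⟩ ≠ μ ⟨k - 2, by omega⟩)
    (αt βt2 : ℝ)
    (hαβa : αt - δ ⟨k - 2, by omega⟩ * βt2 = a)
    (hαβb : αt - μ ⟨k - 2, by omega⟩ * βt2 = b)
    (hβt2 : 0 < βt2)
    (TGL : Matrix (Fin k) (Fin k) ℝ)
    (hTGLdef : TGL = Matrix.of fun i j : Fin k =>
        if i = (⟨k - 1, by omega⟩ : Fin k) ∧ j = (⟨k - 1, by omega⟩ : Fin k) then αt
        else if (i = (⟨k - 1, by omega⟩ : Fin k) ∧ j = (⟨k - 2, by omega⟩ : Fin k)) ∨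
                (i = (⟨k - 2, by omega⟩ : Fin k) ∧ j = (⟨k - 1, by omega⟩ : Fin k))
          then Real.sqrt βt2 else T i j) :
    a ∈ spectrum ℝ TGL ∧ b ∈ spectrum ℝ TGL := by
  obtain ⟨m, rfl⟩ : ∃ m, k = m + 2 := ⟨k - 2, by omega⟩
  set s : ℝ := Real.sqrt βt2 with hs
  have hss : s * s = βt2 := Real.mul_self_sqrt hβt2.le
  -- entry lemmas for TGL
  have e1 : ∀ j : Fin (m + 1), TGL (Fin.last (m + 1)) (Fin.castSucc j)
      = if j = Fin.last m then s else 0 := by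
    intro j
    rw [hTGLdef]
    simp only [Matrix.of_apply]
    rw [if_neg (by
      rintro ⟨-, h⟩
      have := congrArg Fin.val h
      simp only [Fin.coe_castSucc] at this
      have := j.isLt; omega)]
    by_cases hj : j = Fin.last m
    · rw [if_pos (Or.inl ⟨Fin.ext (by simp [Fin.val_last]),
        Fin.ext (by simp [hj, Fin.val_last])⟩), if_pos hj]
    · have hjm : (j : ℕ) ≠ m := fun h => hj (Fin.ext (by simp [Fin.val_last, h]))
      rw [if_neg (by
        rintro (⟨-, h⟩ | ⟨h, -⟩)
        · have := congrArg Fin.val h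
          simp only [Fin.coe_castSucc] at this; omega
        · have := congrArg Fin.val h
          simp only [Fin.val_last] at this; omega), if_neg hj]
      exact htri _ _ (Or.inr (by
        simp only [Fin.val_last, Fin.coe_castSucc]
        have := j.isLt; omega))
  have e2 : TGL (Fin.last (m + 1)) (Fin.last (m + 1)) = αt := by
    rw [hTGLdef]
    simp only [Matrix.of_apply]
    rw [if_pos ⟨Fin.ext (by simp [Fin.val_last]), Fin.ext (by simp [Fin.val_last])⟩]
  have e3 : ∀ (i j : Fin (m + 1)), TGL (Fin.castSucc i) (Fin.castSucc j)
      = leadingBlock T i j := by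
    intro i j
    rw [hTGLdef]
    simp only [Matrix.of_apply]
    rw [if_neg (by
        rintro ⟨h, -⟩
        have := congrArg Fin.val h
        simp only [Fin.coe_castSucc] at this
        have := i.isLt; omega),
      if_neg (by
        rintro (⟨h, -⟩ | ⟨-, h⟩) <;>
        · have := congrArg Fin.val h
          simp only [Fin.coe_castSucc] at this
          first
            | (have := i.isLt; omega)
            | (have := j.isLt; omega))]
    rfl
  have e4 : ∀ i : Fin (m + 1), TGL (Fin.castSucc i) (Fin.last (m + 1))
      = if i = Fin.last m then s else 0 := by
    intro i
    rw [hTGLdef]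
    simp only [Matrix.of_apply]
    rw [if_neg (by
      rintro ⟨h, -⟩
      have := congrArg Fin.val h
      simp only [Fin.coe_castSucc] at this
      have := i.isLt; omega)]
    by_cases hi : i = Fin.last m
    · rw [if_pos (Or.inr ⟨Fin.ext (by simp [hi, Fin.val_last]),
        Fin.ext (by simp [Fin.val_last])⟩), if_pos hi]
    · have him : (i : ℕ) ≠ m := fun h => hi (Fin.ext (by simp [Fin.val_last, h]))
      rw [if_neg (by
        rintro (⟨h, -⟩ | ⟨h, -⟩)
        · have := congrArg Fin.val h
          simp only [Fin.coe_castSucc] at this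
          have := i.isLt; omega
        · have := congrArg Fin.val h
          simp only [Fin.coe_castSucc] at this; omega), if_neg hi]
      exact htri _ _ (Or.inl (by
        simp only [Fin.val_last, Fin.coe_castSucc]
        have := i.isLt; omega))
  -- main argument
  have key : ∀ (c : ℝ) (w : Fin (m + 2 - 1) → ℝ),
      (leadingBlock T - c • (1 : Matrix (Fin (m + 2 - 1)) (Fin (m + 2 - 1)) ℝ)) *ᵥ w
        = (Pi.single (⟨m + 2 - 2, by omega⟩ : Fin (m + 2 - 1)) 1 : Fin (m + 2 - 1) → ℝ) →
      αt - w ⟨m + 2 - 2, by omega⟩ * βt2 = c → c ∈ spectrum ℝ TGL := by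
    intro c w hw hc
    have hw2 : ∀ i : Fin (m + 1), (leadingBlock T *ᵥ w) i
        = c * w i + (if i = Fin.last m then 1 else 0) := by
      intro i
      have h1 := congrFun hw i
      rw [Matrix.sub_mulVec, Matrix.smul_mulVec, Matrix.one_mulVec] at h1
      simp only [Pi.sub_apply, Pi.smul_apply, smul_eq_mul] at h1
      rw [Pi.single_apply] at h1
      by_cases hi : i = Fin.last m
      · rw [if_pos (show i = (⟨m + 2 - 2, by omega⟩ : Fin (m + 2 - 1)) from
          Fin.ext (by have := congrArg Fin.val hi; simp only [Fin.val_last] at this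
                      simpa using this))] at h1
        rw [if_pos hi]
        linarith
      · rw [if_neg (show ¬ i = (⟨m + 2 - 2, by omega⟩ : Fin (m + 2 - 1)) from fun h => by
          have := congrArg Fin.val h
          exact hi (Fin.ext (by
            rw [Fin.val_last, show (i : ℕ) = m + 2 - 2 from by rw [h]]; omega)))] at h1
        rw [if_neg hi]
        linarith
    set v : Fin (m + 2) → ℝ := Fin.snoc (fun i : Fin (m + 1) => s * w i) (-1) with hv
    apply mem_spectrum_of_mulVec_eq (v := v)
    · intro h0
      have : v (Fin.last (m + 1)) = 0 := by rw [h0]; rfl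
      rw [hv, Fin.snoc_last] at this
      norm_num at this
    · funext i
      rw [Matrix.mulVec, dotProduct, Fin.sum_univ_castSucc]
      simp only [hv, Fin.snoc_castSucc, Fin.snoc_last]
      induction i using Fin.lastCases with
      | last =>
        rw [e2]
        have hterm : ∀ j : Fin (m + 1),
            TGL (Fin.last (m + 1)) (Fin.castSucc j) * (s * w j)
            = (if j = Fin.last m then s * s * w (Fin.last m) else 0) := by
          intro j
          rw [e1]
          by_cases hj : j = Fin.last m
          · rw [if_pos hj, if_pos hj, hj]; ring
          · rw [if_neg hj, if_neg hj]; ring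
        rw [Finset.sum_congr rfl fun j _ => hterm j, Finset.sum_ite_eq' Finset.univ]
        simp only [Finset.mem_univ, if_true, Pi.smul_apply, Fin.snoc_last, smul_eq_mul]
        have hwl : w (Fin.last m) = w ⟨m + 2 - 2, by omega⟩ := rfl
        rw [hwl, hss]
        linarith
      | cast i =>
        have hrow : ∀ j : Fin (m + 1),
            TGL (Fin.castSucc i) (Fin.castSucc j) * (s * w j)
            = s * (leadingBlock T i j * w j) := by
          intro j; rw [e3]; ring
        rw [Finset.sum_congr rfl fun j _ => hrow j, ← Finset.mul_sum, e4]
        have hsum : ∑ j : Fin (m + 1), leadingBlock T i j * w j = (leadingBlock T *ᵥ w) i := rfl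
        rw [hsum, hw2 i]
        simp only [Pi.smul_apply, Fin.snoc_castSucc, smul_eq_mul]
        by_cases hi : i = Fin.last m
        · rw [if_pos hi, if_pos hi]; ring
        · rw [if_neg hi, if_neg hi]; ring
  exact ⟨key a δ hδ hαβa, key b μ hμ hαβb⟩
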